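/- For λ > 1 and x in the open unit disk D ⊆ ℝ^n, the point f(x, λ) = (4λx + (1+|x|²)(λ²−1)e₀) / ((1+λ)² + (1−λ)²|x|²) lies in the open upper half unit ball: |f(x,λ)| < 1 and ⟨f(x,λ), e₀⟩ > 0. -/

import Mathlib

open Real RealInnerProductSpace

/-!
Write `r = ‖x‖` and `D = (1 + λ)² + (1 - λ)² r²`. Since `x ⊥ e₀`, Pythagoras gives
`D² ‖f‖² = 16 λ² r² + (1 + r²)² (λ² - 1)²`, and this expression factors as
`D² - D² ‖f‖² = 4 λ (1 - r²) D`, so `1 - ‖f‖² = 4 λ (1 - r²) / D > 0`.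
The `e₀`-component of `f` is `(1 + r²)(λ² - 1) / D`, positive for `λ > 1`.
-/

/-- The Moebius coordinate map
`f(x,λ) = (4λx + (1+|x|²)(λ²−1)e₀) / ((1+λ)² + (1−λ)²|x|²)`. -/
noncomputable def moebius {n : ℕ} (e₀ : EuclideanSpace ℝ (Fin (n + 1)))
    (x : EuclideanSpace ℝ (Fin (n + 1))) (l : ℝ) : EuclideanSpace ℝ (Fin (n + 1)) :=
  ((1 + l) ^ 2 + (1 - l) ^ 2 * ‖x‖ ^ 2)⁻¹ • ((4 * l) • x + ((1 + ‖x‖ ^ 2) * (l ^ 2 - 1)) • e₀)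

lemma norm_smul_add_smul_sq_of_inner_eq_zero {E : Type*} [NormedAddCommGroup E]
    [InnerProductSpace ℝ E] {x e : E} (he : ‖e‖ = 1) (hxe : ⟪x, e⟫ = 0) (a b : ℝ) :
    ‖a • x + b • e‖ ^ 2 = a ^ 2 * ‖x‖ ^ 2 + b ^ 2 := by
  have horth : ⟪a • x, b • e⟫ = 0 := by
    rw [real_inner_smul_left, real_inner_smul_right, hxe, mul_zero, mul_zero]
  rw [sq, norm_add_sq_eq_norm_sq_add_norm_sq_real horth, norm_smul, norm_smul, he,
    Real.norm_eq_abs, Real.norm_eq_abs]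
  nlinarith [sq_abs a, sq_abs b]

lemma moebius_denom_pos (r : ℝ) {l : ℝ} (hl : 0 < l) :
    0 < (1 + l) ^ 2 + (1 - l) ^ 2 * r ^ 2 := by
  positivity

section Moebius

variable {n : ℕ} {e₀ x : EuclideanSpace ℝ (Fin (n + 1))}

lemma inner_moebius_of_inner_eq_zero (he₀ : ‖e₀‖ = 1) (hxe : ⟪x, e₀⟫ = 0) (l : ℝ) :
    ⟪moebius e₀ x l, e₀⟫ =
      (1 + ‖x‖ ^ 2) * (l ^ 2 - 1) / ((1 + l) ^ 2 + (1 - l) ^ 2 * ‖x‖ ^ 2) := by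
  have hee : ⟪e₀, e₀⟫ = 1 := by rw [real_inner_self_eq_norm_sq, he₀, one_pow]
  rw [moebius, real_inner_smul_left, inner_add_left, real_inner_smul_left,
    real_inner_smul_left, hxe, hee]
  ring

lemma one_sub_norm_moebius_sq (he₀ : ‖e₀‖ = 1) (hxe : ⟪x, e₀⟫ = 0) {l : ℝ}
    (hD : (1 + l) ^ 2 + (1 - l) ^ 2 * ‖x‖ ^ 2 ≠ 0) :
    1 - ‖moebius e₀ x l‖ ^ 2 =
      4 * l * (1 - ‖x‖ ^ 2) / ((1 + l) ^ 2 + (1 - l) ^ 2 * ‖x‖ ^ 2) := by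
  rw [moebius, norm_smul, mul_pow, norm_smul_add_smul_sq_of_inner_eq_zero he₀ hxe,
    Real.norm_eq_abs, sq_abs]
  field_simp
  ring

end Moebius

/-- For `λ > 1` and `x` in the open unit disk, the Moebius map lands in the open upper
half unit ball. -/
theorem moebius_interior_to_open_half_ball {n : ℕ}
    (e₀ x : EuclideanSpace ℝ (Fin (n + 1))) (he₀ : ‖e₀‖ = 1)
    (hx_perp : ⟪x, e₀⟫ = 0) (hx : ‖x‖ < 1) (l : ℝ) (hl : 1 < l) :
    ‖moebius e₀ x l‖ < 1 ∧ 0 < ⟪moebius e₀ x l, e₀⟫ := by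
  have hl₀ : 0 < l := zero_lt_one.trans hl
  have hD := moebius_denom_pos ‖x‖ hl₀
  constructor
  · have hx_gap : 0 < 1 - ‖x‖ ^ 2 := sub_pos.2 ((sq_lt_one_iff₀ (norm_nonneg x)).2 hx)
    have hgap : 0 < 1 - ‖moebius e₀ x l‖ ^ 2 := by
      rw [one_sub_norm_moebius_sq he₀ hx_perp hD.ne']
      positivity
    exact (sq_lt_one_iff₀ (norm_nonneg _)).1 (sub_pos.1 hgap)
  · have hl_gap : 0 < l ^ 2 - 1 := sub_pos.2 (one_lt_pow₀ hl two_ne_zero)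
    rw [inner_moebius_of_inner_eq_zero he₀ hx_perp]
    positivity
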